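/- Let λ ∈ ℝ and let k be a non-negative integer with k(k−1)(2λ+k−1)(2λ+k−2) = 0, and set μ = λ + k − 1/2. Then the bilinear differential operator A : h_0 × F_λ → F_μ given by A(h,f) = h f^{(k)} + k(2λ+k−1) h' f^{(k−1)} is sl(2)-invariant. -/
import Mathlib


noncomputable section
open Function
open scoped ContDiff

/-- The subalgebra of smooth functions `ℝ → ℝ`. -/
def SmoothFn : Subalgebra ℝ (ℝ → ℝ) where
  carrier := {f | ContDiff ℝ ∞ f}
  mul_mem' := fun {a b} (hf : ContDiff ℝ ∞ a) (hg : ContDiff ℝ ∞ b) => hf.mul hg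
  add_mem' := fun {a b} (hf : ContDiff ℝ ∞ a) (hg : ContDiff ℝ ∞ b) => hf.add hg
  algebraMap_mem' := fun c => (contDiff_const : ContDiff ℝ ∞ (fun _ : ℝ => c))

/-- The type of smooth functions `ℝ → ℝ`, i.e. `C^∞(ℝ)`; for `λ ∈ ℝ` it also serves as
the space `F_λ` of `λ`-densities `f (dx)^λ`. -/
abbrev SF : Type := SmoothFn

theorem mem_SmoothFn {f : ℝ → ℝ} : f ∈ SmoothFn ↔ ContDiff ℝ ∞ f := ⟨fun h => h, fun h => h⟩

/-- The derivative, as an operation on smooth functions. -/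
def sderiv (f : SF) : SF :=
  ⟨deriv (f : ℝ → ℝ), mem_SmoothFn.mpr (contDiff_infty_iff_deriv.mp (mem_SmoothFn.mp f.2)).2⟩

/-- The function `x` as a smooth function. -/
def cx : SF := ⟨id, mem_SmoothFn.mpr contDiff_id⟩

/-- The Lie derivative `L^λ_{X_g}(f) = g f′ + λ f g′` of the vector field `X_g = g d/dx`
acting on `λ`-densities. -/
def Lc (lam : ℝ) (g f : SF) : SF := g * sderiv f + lam • (sderiv g * f)

/-- The generators `1, x, x²` of `sl(2) ⊂ Vect(ℝ)` (identifying `X_g ↔ g`). -/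
def sl2set : Set SF := {1, cx, cx * cx}

/-- `h₀ ⊂ F_{−1/2}`: the span of `x (dx)^{−1/2}` and `(dx)^{−1/2}`. -/
def h0sub : Submodule ℝ SF := Submodule.span ℝ {cx, 1}

/-- `h₁ ⊂ F_0`: the span of the constant function `1`. -/
def h1sub : Submodule ℝ SF := Submodule.span ℝ {1}

/-- A bilinear differential operator `h₀ × F_λ → F_μ`:
`A(h,f) = Σ_{i,j} a_{i,j} h^{(i)} f^{(j)}` with smooth coefficients. -/
def IsBilinDiffOp0 (A : h0sub → SF → SF) : Prop :=
  ∃ (N : ℕ) (a : Fin (N + 1) → Fin (N + 1) → SF),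
    ∀ (h : h0sub) (f : SF),
      A h f = ∑ i : Fin (N + 1), ∑ j : Fin (N + 1),
        a i j * (sderiv^[(i : ℕ)] h.1 * sderiv^[(j : ℕ)] f)

/-- A bilinear differential operator `h₁ × F_λ → F_μ`. -/
def IsBilinDiffOp1 (B : h1sub → SF → SF) : Prop :=
  ∃ (N : ℕ) (a : Fin (N + 1) → Fin (N + 1) → SF),
    ∀ (h : h1sub) (f : SF),
      B h f = ∑ i : Fin (N + 1), ∑ j : Fin (N + 1),
        a i j * (sderiv^[(i : ℕ)] h.1 * sderiv^[(j : ℕ)] f)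

/-- The transvectant-type bilinear differential operator
`A(h,f) = h f^{(k)} + k(2λ+k−1) h′ f^{(k−1)} : h₀ × F_λ → F_{λ+k−1/2}`. -/
def trans0 (lam : ℝ) (k : ℕ) (h : h0sub) (f : SF) : SF :=
  h.1 * sderiv^[k] f + ((k : ℝ) * (2 * lam + (k : ℝ) - 1)) • (sderiv h.1 * sderiv^[k - 1] f)

lemma SF_diff (f : SF) : Differentiable ℝ (f : ℝ → ℝ) :=
  (contDiff_infty_iff_deriv.mp f.2).1

lemma sderiv_add (a b : SF) : sderiv (a + b) = sderiv a + sderiv b := by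
  apply Subtype.ext; funext x
  exact deriv_add (SF_diff a x) (SF_diff b x)

lemma sderiv_mul (a b : SF) : sderiv (a * b) = sderiv a * b + a * sderiv b := by
  apply Subtype.ext; funext x
  exact deriv_mul (SF_diff a x) (SF_diff b x)

lemma sderiv_smul (c : ℝ) (a : SF) : sderiv (c • a) = c • sderiv a := by
  apply Subtype.ext; funext x
  exact deriv_const_mul c (SF_diff a x)

lemma sderiv_one : sderiv (1 : SF) = 0 := by
  apply Subtype.ext; funext x
  exact deriv_const x 1

lemma sderiv_cx : sderiv cx = 1 := by
  apply Subtype.ext; funext x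
  exact deriv_id x

lemma sderiv_iter (n : ℕ) (a : SF) : sderiv (sderiv^[n] a) = sderiv^[n+1] a :=
  (Function.iterate_succ_apply' _ _ _).symm

lemma iter_shift (n : ℕ) (a : SF) : sderiv^[n] (sderiv a) = sderiv^[n+1] a :=
  (Function.iterate_succ_apply _ _ _).symm

lemma iter_add (n : ℕ) (a b : SF) : sderiv^[n] (a + b) = sderiv^[n] a + sderiv^[n] b := by
  induction n with
  | zero => rfl
  | succ n ih => rw [iterate_succ_apply', ih, sderiv_add, ← sderiv_iter, ← sderiv_iter]

lemma iter_smul (n : ℕ) (c : ℝ) (a : SF) : sderiv^[n] (c • a) = c • sderiv^[n] a := by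
  induction n with
  | zero => rfl
  | succ n ih => rw [iterate_succ_apply', ih, sderiv_smul, ← sderiv_iter]

lemma iter_x (n : ℕ) (a : SF) :
    sderiv^[n] (cx * a) = cx * sderiv^[n] a + (n : ℝ) • sderiv^[n-1] a := by
  induction n with
  | zero => simp
  | succ n ih =>
    rw [iterate_succ_apply', ih, sderiv_add, sderiv_mul, sderiv_smul, sderiv_cx, one_mul,
      sderiv_iter]
    have h2 : (n:ℝ) • sderiv (sderiv^[n-1] a) = (n:ℝ) • sderiv^[n] a := by
      cases n with
      | zero => simp
      | succ m => rw [Nat.succ_sub_one, sderiv_iter]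
    rw [h2, Nat.succ_sub_one]
    push_cast
    rw [add_smul, one_smul]
    abel


@[simp] lemma coe_apply_add (a b : SF) (x : ℝ) : ((a+b : SF) : ℝ→ℝ) x = (a:ℝ→ℝ) x + (b:ℝ→ℝ) x := rfl
@[simp] lemma coe_apply_mul (a b : SF) (x : ℝ) : ((a*b : SF) : ℝ→ℝ) x = (a:ℝ→ℝ) x * (b:ℝ→ℝ) x := rfl
@[simp] lemma coe_apply_smul (c : ℝ) (a : SF) (x : ℝ) : ((c • a : SF) : ℝ→ℝ) x = c * (a:ℝ→ℝ) x := rfl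
@[simp] lemma coe_apply_one (x : ℝ) : ((1 : SF) : ℝ→ℝ) x = 1 := rfl
@[simp] lemma coe_apply_cx (x : ℝ) : ((cx : SF) : ℝ→ℝ) x = x := rfl

lemma iter_one (a : SF) : sderiv^[1] a = sderiv a := rfl

lemma iter_two (a : SF) : sderiv^[2] a = sderiv (sderiv a) := rfl

lemma iter_xd (n : ℕ) (a : SF) :
    sderiv^[n] (cx * sderiv a) = cx * sderiv^[n+1] a + (n : ℝ) • sderiv^[n] a := by
  rw [iter_x, iter_shift]
  congr 1
  cases n with
  | zero => simp
  | succ m => rw [Nat.succ_sub_one, iter_shift]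

lemma iter_xxd (n : ℕ) (a : SF) :
    sderiv^[n] (cx * (cx * sderiv a))
      = cx * (cx * sderiv^[n+1] a) + (2 * (n : ℝ)) • (cx * sderiv^[n] a)
        + ((n : ℝ) * ((n : ℝ) - 1)) • sderiv^[n-1] a := by
  cases n with
  | zero => simp
  | succ m =>
    rw [iter_x, iter_xd, Nat.succ_sub_one, iter_xd]
    apply Subtype.ext; funext x
    simp only [coe_apply_add, coe_apply_mul, coe_apply_smul, coe_apply_one, coe_apply_cx]
    push_cast
    ring

/-- For `k ∈ ℕ` with `k(k−1)(2λ+k−1)(2λ+k−2) = 0` and `μ = λ + k − 1/2`, the bilinear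
differential operator `A(h,f) = h f^{(k)} + k(2λ+k−1) h′ f^{(k−1)}` on `h₀ × F_λ` is
`sl(2)`-invariant. -/
theorem sl2_invariance_of_transvectant (lam : ℝ) (k : ℕ)
    (hk : (k : ℝ) * ((k : ℝ) - 1) * (2 * lam + k - 1) * (2 * lam + k - 2) = 0) :
    ∀ g ∈ sl2set, ∀ (h : h0sub) (hm : Lc (-(1 : ℝ) / 2) g h.1 ∈ h0sub) (f : SF),
      Lc (lam + k - 1 / 2) g (trans0 lam k h f)
        = trans0 lam k ⟨Lc (-(1 : ℝ) / 2) g h.1, hm⟩ f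
          + trans0 lam k h (Lc lam g f) := by
  intro g hg h hm f
  have hg' : g = 1 ∨ g = cx ∨ g = cx * cx := hg
  rcases k with _ | _ | m <;> rcases hg' with rfl | rfl | rfl <;>
  · simp only [Lc, trans0, mul_assoc, sderiv_add, sderiv_mul, sderiv_smul, sderiv_one, sderiv_cx,
      one_mul, mul_one, add_mul, zero_mul, mul_zero, smul_zero, add_zero, zero_add]
    try simp only [iter_add, iter_smul, iter_xxd, iter_xd]
    try simp only [iter_x]
    try simp only [iter_shift, sderiv_iter, Nat.add_sub_cancel, Nat.sub_self, Nat.zero_sub,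
      Function.iterate_zero, Function.iterate_one, iter_one, iter_two, id_eq, zero_add, Nat.reduceAdd, Nat.reduceSub]
    apply Subtype.ext; funext x
    simp only [coe_apply_add, coe_apply_mul, coe_apply_smul, coe_apply_one, coe_apply_cx]
    push_cast at hk ⊢
    try ring
    try linear_combination (-(((sderiv (h:SF) : SF)):ℝ→ℝ) x * (((sderiv^[m] f : SF)):ℝ→ℝ) x) * hk
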